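/- arXiv:1903.12251 — 4 statements merged into one kernel-verified Lean document; each statement's English description precedes it below -/
import Mathlib

section
/- Let g be a Lorentzian metric on a 4-manifold with orthonormal frame {e_a} and dual coframe {α^a}, inducing coordinates (x^μ, v_a) on the cotangent bundle via p = v_a α^a. Then the Liouville vector field of g takes the form L = η^{ab} v_a e_b^μ ∂_{x^μ} + η^{ab} v_a v_c Γ_b{}^c{}_d ∂_{v_d}, where Γ_a{}^c{}_b = α^c(∇_{e_a} e_b) are the frame connection coefficients of the Levi-Civita connection. -/
/-! In the chart `(x, p)` the `∂_{p_γ}`-component of `L` is `-η^{ab} v_a (∂_γ e_b{}^μ) p_μ`.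
Differentiating the duality `e_a{}^μ α^a{}_ν = δ^μ_ν` and contracting the torsion-free structure
equation with `α^d{}_γ` shows that the frame expression exceeds it by
`η^{ab} v_a v_c Γ_d{}^c{}_b α^d{}_γ`. By metricity `Γ_d{}^c{}_b`, with `c` lowered by `η`, is
antisymmetric in its last two indices, so its contraction with `v^b v^c` vanishes. -/

open scoped BigOperators

def eta : Fin 4 → Fin 4 → ℝ := fun a b =>
  if a = b then (if a = 0 then 1 else -1) else 0

open Finset

section Frame

variable {ι : Type*} [Fintype ι]

theorem sum_sum_comm_sum_sum {κ : Type*} [Fintype κ] (f : ι → ι → κ → κ → ℝ) :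
    ∑ μ, ∑ ν, ∑ a, ∑ b, f μ ν a b = ∑ a, ∑ b, ∑ μ, ∑ ν, f μ ν a b := by
  calc _ = ∑ x : ι × ι, ∑ y : κ × κ, f x.1 x.2 y.1 y.2 := by simp only [Fintype.sum_prod_type]
    _ = ∑ y : κ × κ, ∑ x : ι × ι, f x.1 x.2 y.1 y.2 := sum_comm
    _ = _ := by simp only [Fintype.sum_prod_type]

theorem sum_mul_sum_mul_eq_zero_of_antisymm (w : ι → ℝ) {N : ι → ι → ℝ}
    (hN : ∀ b c, N b c = -N c b) : ∑ b, w b * ∑ c, w c * N b c = 0 := by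
  have h : ∑ b, ∑ c, w b * w c * N b c = -∑ b, ∑ c, w b * w c * N b c := by
    conv_lhs => rw [sum_comm]
    rw [← sum_neg_distrib]
    exact sum_congr rfl fun c _ => by
      rw [← sum_neg_distrib]; exact sum_congr rfl fun b _ => by rw [hN]; ring
  simp only [mul_sum, ← mul_assoc]
  linarith

theorem sum_metric_frame_mul {η e : ι → ι → ℝ} {p v : ι → ℝ}
    (hv : ∀ a, v a = ∑ μ, e a μ * p μ) (ν : ι) :
    ∑ μ, (∑ a, ∑ b, η a b * e a μ * e b ν) * p μ = ∑ a, ∑ b, η a b * v a * e b ν := by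
  simp only [hv, sum_mul, mul_sum]
  rw [sum_comm]
  refine sum_congr rfl fun a _ => ?_
  rw [sum_comm]
  exact sum_congr rfl fun b _ => sum_congr rfl fun μ _ => by ring

theorem neg_half_sum_deriv_metric {η e D : ι → ι → ℝ} (hsymm : ∀ a b, η a b = η b a)
    {p v : ι → ℝ} (hv : ∀ a, v a = ∑ μ, e a μ * p μ) :
    -(1 / 2) * ∑ μ, ∑ ν, (∑ a, ∑ b, η a b * (D a μ * e b ν + e a μ * D b ν)) * p μ * p ν =
      -∑ a, ∑ b, η a b * v a * ∑ μ, D b μ * p μ := by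
  have hswap : ∑ a, ∑ b, η a b * (∑ μ, D a μ * p μ) * v b =
      ∑ a, ∑ b, η a b * v a * ∑ μ, D b μ * p μ := by
    rw [sum_comm]
    exact sum_congr rfl fun a _ => sum_congr rfl fun b _ => by rw [hsymm]; ring
  have hexpand : ∑ μ, ∑ ν, (∑ a, ∑ b, η a b * (D a μ * e b ν + e a μ * D b ν)) * p μ * p ν =
      ∑ a, ∑ b, (η a b * (∑ μ, D a μ * p μ) * v b + η a b * v a * ∑ μ, D b μ * p μ) := by
    simp only [sum_mul]
    rw [sum_sum_comm_sum_sum]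
    refine sum_congr rfl fun a _ => sum_congr rfl fun b _ => ?_
    calc _ = η a b * ∑ μ, ∑ ν, (D a μ * p μ * (e b ν * p ν) + e a μ * p μ * (D b ν * p ν)) := by
          simp only [mul_sum]
          exact sum_congr rfl fun μ _ => sum_congr rfl fun ν _ => by ring
      _ = _ := by simp only [sum_add_distrib, ← sum_mul_sum, hv]; ring
  simp only [hexpand, sum_add_distrib, hswap]
  ring

variable [DecidableEq ι]

theorem sum_metric_mul_sum_eq_zero_of_skew {η M : ι → ι → ℝ} (hsymm : ∀ a b, η a b = η b a)
    (hinv : ∀ a c, ∑ b, η a b * η b c = if a = c then 1 else 0)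
    (hM : ∀ b c, ∑ k, (M k b * η k c + M k c * η k b) = 0) (v : ι → ℝ) :
    ∑ a, ∑ b, η a b * v a * ∑ c, v c * M c b = 0 := by
  set w : ι → ℝ := fun b => ∑ a, η a b * v a
  have hlower : ∀ b, ∑ c, v c * M c b = ∑ c, w c * ∑ k, M k b * η k c := by
    intro b
    calc _ = ∑ a, ∑ k, v a * M k b * ∑ c, η a c * η c k := by
          simp_rw [hinv, mul_ite, mul_one, mul_zero, sum_ite_eq, mem_univ, if_true]
      _ = ∑ a, ∑ c, ∑ k, η a c * v a * (M k b * η k c) := by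
          refine sum_congr rfl fun a _ => ?_
          simp only [mul_sum]
          rw [sum_comm]
          exact sum_congr rfl fun c _ => sum_congr rfl fun k _ => by rw [hsymm c k]; ring
      _ = _ := by
          rw [sum_comm]
          simp only [w, sum_mul_sum]
  calc _ = ∑ b, w b * ∑ c, v c * M c b := by
        rw [sum_comm]; simp only [w, sum_mul]
    _ = 0 := by
        simp_rw [hlower]
        refine sum_mul_sum_mul_eq_zero_of_antisymm w fun b c => ?_
        rw [eq_neg_iff_add_eq_zero, ← sum_add_distrib]
        exact hM b c

theorem sum_frame_mul_coframe_of_dual {e α : ι → ι → ℝ}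
    (hdual : ∀ a b, ∑ μ, α a μ * e b μ = if a = b then 1 else 0) (ν γ : ι) :
    ∑ a, e a ν * α a γ = if ν = γ then 1 else 0 := by
  have h : Matrix.of α * (Matrix.of e).transpose = 1 := by
    ext a b
    simp [Matrix.mul_apply, Matrix.one_apply, hdual]
  simpa [Matrix.mul_apply, Matrix.one_apply] using congr($(mul_eq_one_comm.mp h) ν γ)

theorem eq_sum_coframe_mul_of_frame_components {e α : ι → ι → ℝ}
    (hdual : ∀ a b, ∑ μ, α a μ * e b μ = if a = b then 1 else 0) {p v : ι → ℝ}
    (hv : ∀ a, v a = ∑ μ, e a μ * p μ) (γ : ι) :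
    p γ = ∑ c, α c γ * v c := by
  simp_rw [hv, mul_sum]
  rw [sum_comm]
  simp_rw [← mul_assoc, ← sum_mul, mul_comm (α _ γ), sum_frame_mul_coframe_of_dual hdual,
    ite_mul, one_mul, zero_mul, sum_ite_eq', mem_univ, if_true]

theorem sum_deriv_frame_mul_coframe {e α : (ι → ℝ) → ι → ι → ℝ} {De Dα : ι → ι → ℝ}
    {x : ι → ℝ} {σ : ι}
    (hDe : ∀ a μ, HasDerivAt (fun t => e (Function.update x σ t) a μ) (De a μ) (x σ))
    (hDα : ∀ a μ, HasDerivAt (fun t => α (Function.update x σ t) a μ) (Dα a μ) (x σ))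
    (hdual : ∀ y a b, ∑ μ, α y a μ * e y b μ = if a = b then 1 else 0) (ν γ : ι) :
    ∑ d, De d ν * α x d γ = -∑ d, e x d ν * Dα d γ := by
  have hsum : HasDerivAt
      (fun t => ∑ d, e (Function.update x σ t) d ν * α (Function.update x σ t) d γ)
      (∑ d, (De d ν * α x d γ + e x d ν * Dα d γ)) (x σ) := by
    refine HasDerivAt.fun_sum fun d _ => ?_
    simpa using (hDe d ν).fun_mul (hDα d γ)
  have hconst : HasDerivAt
      (fun t => ∑ d, e (Function.update x σ t) d ν * α (Function.update x σ t) d γ)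
      0 (x σ) := by
    simp_rw [sum_frame_mul_coframe_of_dual (hdual _)]
    exact hasDerivAt_const _ _
  rw [eq_neg_iff_add_eq_zero, ← sum_add_distrib]
  exact hsum.unique hconst

theorem sum_coframe_mul_deriv_frame {e α : ι → ι → ℝ} {De Dα : ι → ι → ι → ℝ}
    (hdual : ∀ a b, ∑ μ, α a μ * e b μ = if a = b then 1 else 0)
    (hderiv : ∀ σ ν γ, ∑ d, De σ d ν * α d γ = -∑ d, e d ν * Dα σ d γ) (c ν γ : ι) :
    ∑ μ, α c μ * (∑ d, De ν d μ * α d γ) = -Dα ν c γ := by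
  simp_rw [hderiv, mul_neg, sum_neg_distrib, mul_sum]
  rw [sum_comm]
  simp_rw [← mul_assoc, ← sum_mul, hdual, ite_mul, one_mul, zero_mul, sum_ite_eq, mem_univ,
    if_true]

theorem sum_coframe_mul_deriv_add_connection {e α : ι → ι → ℝ} {De Dα Γ : ι → ι → ι → ℝ}
    (hdual : ∀ a b, ∑ μ, α a μ * e b μ = if a = b then 1 else 0)
    (hderiv : ∀ σ ν γ, ∑ d, De σ d ν * α d γ = -∑ d, e d ν * Dα σ d γ)
    (htor : ∀ a b c, Γ a c b - Γ b c a =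
        ∑ μ, α c μ * (∑ ν, (e a ν * De ν b μ - e b ν * De ν a μ))) (a c γ : ι) :
    ∑ μ, α c μ * De γ a μ + ∑ μ, e a μ * Dα μ c γ + ∑ d, Γ a c d * α d γ =
      ∑ d, Γ d c a * α d γ := by
  have h1 : ∑ d, ∑ μ, ∑ ν, α c μ * e a ν * De ν d μ * α d γ = -∑ ν, e a ν * Dα ν c γ := by
    calc _ = ∑ ν, e a ν * ∑ μ, α c μ * ∑ d, De ν d μ * α d γ := by
          simp only [mul_sum]
          rw [sum_comm]
          conv_rhs => rw [sum_comm]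
          refine sum_congr rfl fun μ _ => ?_
          rw [sum_comm]
          exact sum_congr rfl fun ν _ => sum_congr rfl fun d _ => by ring
      _ = _ := by simp_rw [sum_coframe_mul_deriv_frame hdual hderiv, mul_neg, sum_neg_distrib]
  have h2 : ∑ d, ∑ μ, ∑ ν, α c μ * e d ν * De ν a μ * α d γ = ∑ μ, α c μ * De γ a μ := by
    calc _ = ∑ μ, α c μ * ∑ ν, (∑ d, e d ν * α d γ) * De ν a μ := by
          simp only [mul_sum, sum_mul]
          rw [sum_comm]
          refine sum_congr rfl fun μ _ => ?_
          rw [sum_comm]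
          exact sum_congr rfl fun ν _ => sum_congr rfl fun d _ => by ring
      _ = _ := by
          simp_rw [sum_frame_mul_coframe_of_dual hdual, ite_mul, one_mul, zero_mul, sum_ite_eq',
            mem_univ, if_true]
  have hcontract : ∑ d, (Γ a c d - Γ d c a) * α d γ =
      -(∑ μ, α c μ * De γ a μ + ∑ μ, e a μ * Dα μ c γ) := by
    simp only [htor, sum_mul, mul_sum, mul_sub, sub_mul, sum_sub_distrib, ← mul_assoc]
    rw [h1, h2]
    ring
  simp only [sub_mul, sum_sub_distrib] at hcontract
  linarith

theorem sum_mul_sum_connection_mul_coframe {e α : ι → ι → ℝ} {De Dα Γ : ι → ι → ι → ℝ}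
    (hdual : ∀ a b, ∑ μ, α a μ * e b μ = if a = b then 1 else 0)
    (hderiv : ∀ σ ν γ, ∑ d, De σ d ν * α d γ = -∑ d, e d ν * Dα σ d γ)
    (htor : ∀ a b c, Γ a c b - Γ b c a =
        ∑ μ, α c μ * (∑ ν, (e a ν * De ν b μ - e b ν * De ν a μ)))
    {p v : ι → ℝ} (hv : ∀ a, v a = ∑ μ, e a μ * p μ) (b γ : ι) :
    ∑ c, v c * ∑ d, Γ d c b * α d γ =
      ∑ μ, De γ b μ * p μ + ∑ μ, e b μ * ∑ c, Dα μ c γ * v c +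
        ∑ c, ∑ d, v c * Γ b c d * α d γ := by
  simp only [← sum_coframe_mul_deriv_add_connection hdual hderiv htor b _ γ, mul_add,
    sum_add_distrib, eq_sum_coframe_mul_of_frame_components hdual hv]
  congr 1
  · congr 1 <;>
    · simp only [mul_sum]
      rw [sum_comm]
      exact sum_congr rfl fun μ _ => sum_congr rfl fun c _ => by ring
  · simp only [mul_sum]
    exact sum_congr rfl fun c _ => sum_congr rfl fun d _ => by ring

end Frame

theorem eta_comm (a b : Fin 4) : eta a b = eta b a := by
  unfold eta; split_ifs <;> simp_all

theorem sum_eta_mul_eta (a c : Fin 4) : ∑ b, eta a b * eta b c = if a = c then 1 else 0 := by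
  fin_cases a <;> fin_cases c <;> simp [eta]

/-- `e x a μ = e_a{}^μ`, `α x a μ = α^a{}_μ`, `Γ x a c b = Γ_a{}^c{}_b`, and `De x ν`, `Dα x ν`
are the `∂_{x^ν}`-derivatives of `e`, `α`. The conjuncts compare the `∂_{x^ν}` and `∂_{p_γ}`
components in the chart `(x, p)`, the frame expression being pushed forward along
`p_γ = α^a{}_γ v_a`. -/
theorem liouville_frame_form
    (e α : (Fin 4 → ℝ) → Fin 4 → Fin 4 → ℝ)
    (De Dα : (Fin 4 → ℝ) → Fin 4 → Fin 4 → Fin 4 → ℝ)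
    (Γ : (Fin 4 → ℝ) → Fin 4 → Fin 4 → Fin 4 → ℝ)
    (hDe : ∀ x ν a μ, HasDerivAt (fun t => e (Function.update x ν t) a μ)
        (De x ν a μ) (x ν))
    (hDα : ∀ x ν a μ, HasDerivAt (fun t => α (Function.update x ν t) a μ)
        (Dα x ν a μ) (x ν))
    (hdual : ∀ x a b, (∑ μ, α x a μ * e x b μ) = if a = b then (1 : ℝ) else 0)
    -- torsion-free structure equation: Γ_a{}^c{}_b - Γ_b{}^c{}_a = α^c([e_a, e_b])
    (htor : ∀ x a b c, Γ x a c b - Γ x b c a =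
        ∑ μ, α x c μ * (∑ ν, (e x a ν * De x ν b μ - e x b ν * De x ν a μ)))
    -- metricity: Γ_a{}^d{}_b η_{dc} + Γ_a{}^d{}_c η_{db} = 0
    (hmet : ∀ x a b c, (∑ d, (Γ x a d b * eta d c + Γ x a d c * eta d b)) = 0) :
    ∀ (x p v : Fin 4 → ℝ), (∀ a, v a = ∑ μ, e x a μ * p μ) →
      -- ∂_x components agree:
      (∀ ν, (∑ μ, (∑ a, ∑ b, eta a b * e x a μ * e x b ν) * p μ) =
          ∑ a, ∑ b, eta a b * v a * e x b ν) ∧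
      -- ∂_p components agree:
      (∀ γ, -(1 / 2) * (∑ μ, ∑ ν,
            (∑ a, ∑ b, eta a b * (De x γ a μ * e x b ν + e x a μ * De x γ b ν))
              * p μ * p ν) =
          (∑ a, ∑ b, eta a b * v a *
              (∑ μ, e x b μ * (∑ c, Dα x μ c γ * v c)))
            + ∑ a, ∑ b, ∑ c, ∑ d,
                eta a b * v a * v c * Γ x b c d * α x d γ) := by
  intro x p v hv
  refine ⟨sum_metric_frame_mul hv, fun γ => ?_⟩
  have hderiv σ := sum_deriv_frame_mul_coframe (hDe x σ) (hDα x σ) hdual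
  set M : Fin 4 → Fin 4 → ℝ := fun c b => ∑ d, Γ x d c b * α x d γ
  have hM : ∀ b c, ∑ k, (M k b * eta k c + M k c * eta k b) = 0 := by
    intro b c
    simp only [M, sum_mul, ← sum_add_distrib]
    rw [sum_comm]
    refine sum_eq_zero fun d _ => ?_
    rw [← mul_zero (α x d γ), ← hmet x d b c, mul_sum]
    exact sum_congr rfl fun k _ => by ring
  have key := sum_metric_mul_sum_eq_zero_of_skew eta_comm sum_eta_mul_eta hM v
  simp only [M, sum_mul_sum_connection_mul_coframe (hdual x) hderiv (htor x) hv, mul_add,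
    sum_add_distrib] at key
  rw [neg_half_sum_deriv_metric eta_comm hv]
  have hconn : ∑ a, ∑ b, ∑ c, ∑ d, eta a b * v a * v c * Γ x b c d * α x d γ =
      ∑ a, ∑ b, eta a b * v a * ∑ c, ∑ d, v c * Γ x b c d * α x d γ := by
    simp only [mul_sum, mul_assoc]
  linarith
end

section
/- Let g = Ξ² g̃ be two conformally related Lorentzian metrics on a manifold M with conformal factor Ξ > 0, and let L̃, L be the respective Liouville vector fields on T*M. Then on the common null mass shell P = {(x,p) ∈ T*M : g̃^{-1}_x(p,p) = 0}, one has L̃ = Ξ² L (as vector fields tangent to P). -/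
open scoped BigOperators

/-- Conformal covariance of the Liouville vector field.  Let `g = Ξ² g̃` (so for
the inverse metrics `g̃^{μν} = Ξ² g^{μν}`), with `Ξ > 0`, and let `dg`, `dgt`, `dΞ` be the
coordinate partial derivatives of `g^{μν}`, `g̃^{μν}`, `Ξ`.  Then at every point `(x, p)` of the
common null mass shell `g̃^{-1}_x(p,p) = 0`, the components of the two Liouville vector fields
`L̃ = g̃^{μν} p_μ ∂_{x^ν} - (1/2) ∂_γ g̃^{αβ} p_α p_β ∂_{p_γ}` and the analogous `L` satisfy
`L̃ = Ξ² L`. -/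
theorem liouville_conformal
    (Ξ : (Fin 4 → ℝ) → ℝ)
    (g gt : (Fin 4 → ℝ) → Fin 4 → Fin 4 → ℝ)
    (dg dgt : (Fin 4 → ℝ) → Fin 4 → Fin 4 → Fin 4 → ℝ)
    (dΞ : (Fin 4 → ℝ) → Fin 4 → ℝ)
    (hΞ : ∀ x, 0 < Ξ x)
    (hconf : ∀ x μ ν, gt x μ ν = Ξ x ^ 2 * g x μ ν)
    (hdg : ∀ x γ μ ν, HasDerivAt (fun t => g (Function.update x γ t) μ ν)
        (dg x γ μ ν) (x γ))
    (hdgt : ∀ x γ μ ν, HasDerivAt (fun t => gt (Function.update x γ t) μ ν)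
        (dgt x γ μ ν) (x γ))
    (hdΞ : ∀ x γ, HasDerivAt (fun t => Ξ (Function.update x γ t)) (dΞ x γ) (x γ)) :
    ∀ x p : Fin 4 → ℝ, (∑ μ, ∑ ν, gt x μ ν * p μ * p ν) = 0 →
      (∀ ν, (∑ μ, gt x μ ν * p μ) = Ξ x ^ 2 * ∑ μ, g x μ ν * p μ) ∧
      (∀ γ, -(1 / 2) * (∑ μ, ∑ ν, dgt x γ μ ν * p μ * p ν) =
          Ξ x ^ 2 * (-(1 / 2) * ∑ μ, ∑ ν, dg x γ μ ν * p μ * p ν)) := by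
  intro x p hnull
  -- key: dgt = 2 Ξ dΞ g + Ξ² dg, by uniqueness of derivatives
  have hkey : ∀ γ μ ν, dgt x γ μ ν
      = 2 * Ξ x * dΞ x γ * g x μ ν + Ξ x ^ 2 * dg x γ μ ν := by
    intro γ μ ν
    have h1 : HasDerivAt (fun t => gt (Function.update x γ t) μ ν)
        (2 * Ξ x * dΞ x γ * g x μ ν + Ξ x ^ 2 * dg x γ μ ν) (x γ) := by
      have : HasDerivAt (fun t => Ξ (Function.update x γ t) ^ 2 *
          g (Function.update x γ t) μ ν)
          ((2 * Ξ (Function.update x γ (x γ)) ^ 1 * dΞ x γ) *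
            g (Function.update x γ (x γ)) μ ν +
            Ξ (Function.update x γ (x γ)) ^ 2 * dg x γ μ ν) (x γ) :=
        (((hdΞ x γ).pow 2).mul (hdg x γ μ ν))
      simp only [Function.update_eq_self] at this
      have heq : (fun t => gt (Function.update x γ t) μ ν)
          = fun t => Ξ (Function.update x γ t) ^ 2 * g (Function.update x γ t) μ ν :=
        funext fun t => hconf _ μ ν
      rw [heq]
      convert this using 1
      ring
    exact HasDerivAt.unique (hdgt x γ μ ν) h1
  -- null shell carries over to g
  have hg0 : (∑ μ, ∑ ν, g x μ ν * p μ * p ν) = 0 := by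
    have : Ξ x ^ 2 * (∑ μ, ∑ ν, g x μ ν * p μ * p ν) = 0 := by
      rw [Finset.mul_sum]
      simp_rw [Finset.mul_sum]
      rw [← hnull]
      refine Finset.sum_congr rfl fun μ _ => Finset.sum_congr rfl fun ν _ => ?_
      rw [hconf]; ring
    exact (mul_eq_zero.mp this).resolve_left (pow_ne_zero 2 (hΞ x).ne')
  constructor
  · intro ν
    rw [Finset.mul_sum]
    exact Finset.sum_congr rfl fun μ _ => by rw [hconf]; ring
  · intro γ
    have : (∑ μ, ∑ ν, dgt x γ μ ν * p μ * p ν)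
        = 2 * Ξ x * dΞ x γ * (∑ μ, ∑ ν, g x μ ν * p μ * p ν)
          + Ξ x ^ 2 * (∑ μ, ∑ ν, dg x γ μ ν * p μ * p ν) := by
      rw [Finset.mul_sum, Finset.mul_sum, ← Finset.sum_add_distrib]
      refine Finset.sum_congr rfl fun μ _ => ?_
      rw [Finset.mul_sum, Finset.mul_sum, ← Finset.sum_add_distrib]
      refine Finset.sum_congr rfl fun ν _ => ?_
      rw [hkey]; ring
    rw [this, hg0]; ring
end

section
/- Let f ∈ C¹ be a particle distribution on the null mass shell, expressed in g-frame coordinates as 𝔣(x, v_a) and in g̃-frame coordinates as 𝔣̃(x, ṽ_a), with g = Ξ² g̃. Then the frame components of the two energy-momentum tensors satisfy T̃_{ab} = Ξ⁴ T_{ab}, and the energy-momentum tensors themselves satisfy T̃[f] = Ξ² T[f]. -/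
open scoped BigOperators
open MeasureTheory

/-- `|v| = √(v₁² + v₂² + v₃²)`. -/
noncomputable def norm3 (v : Fin 3 → ℝ) : ℝ := Real.sqrt (∑ i, v i ^ 2)

/-- The null momentum `(v₀, v₁, v₂, v₃)` with `v₀ = -|v|`. -/
noncomputable def nullMom (v : Fin 3 → ℝ) : Fin 4 → ℝ :=
  Matrix.vecCons (-(norm3 v)) v

/-- Conformal transformation of the Vlasov energy-momentum tensor.  At a fixed
space-time point, let `𝔣̃` and `𝔣` be the realizations of the distribution function in the
`g̃`- and `g`-frame coordinates, related by `𝔣(v) = 𝔣̃(Ξ v)` (since `ṽ_a = Ξ v_a`).  With the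
frame components
`T_{ab} = -8π ∫ 𝔣(v) v_a v_b / |v| dv` (and analogously `T̃_{ab}` with `𝔣̃`),
one has `T̃_{ab} = Ξ⁴ T_{ab}`; and for the tensors, with `α̃^a = Ξ⁻¹ α^a`,
`T̃ = Σ T̃_{ab} α̃^a ⊗ α̃^b = Ξ² Σ T_{ab} α^a ⊗ α^b = Ξ² T`. -/
theorem energy_momentum_conformal
    (Ξ : ℝ) (hΞ : 0 < Ξ)
    (ft f : (Fin 3 → ℝ) → ℝ)
    (hrel : ∀ v, f v = ft (Ξ • v))
    (α : Fin 4 → Fin 4 → ℝ)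
    (hint : ∀ a b : Fin 4,
      Integrable (fun v : Fin 3 → ℝ => ft v * nullMom v a * nullMom v b / norm3 v)) :
    (∀ a b : Fin 4,
        (-(8 * Real.pi) * ∫ v : Fin 3 → ℝ, ft v * nullMom v a * nullMom v b / norm3 v)
          = Ξ ^ 4 *
            (-(8 * Real.pi) * ∫ v : Fin 3 → ℝ, f v * nullMom v a * nullMom v b / norm3 v)) ∧
    (∀ μ ν : Fin 4,
        (∑ a, ∑ b,
          (-(8 * Real.pi) * ∫ v : Fin 3 → ℝ, ft v * nullMom v a * nullMom v b / norm3 v)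
            * (Ξ⁻¹ * α a μ) * (Ξ⁻¹ * α b ν))
          = Ξ ^ 2 * ∑ a, ∑ b,
              (-(8 * Real.pi) * ∫ v : Fin 3 → ℝ, f v * nullMom v a * nullMom v b / norm3 v)
                * α a μ * α b ν) := by
  have hΞ' : Ξ ≠ 0 := ne_of_gt hΞ
  have hmain : ∀ a b : Fin 4,
      (∫ v : Fin 3 → ℝ, f v * nullMom v a * nullMom v b / norm3 v)
        = Ξ⁻¹ * (Ξ ^ 3)⁻¹ * ∫ v : Fin 3 → ℝ, ft v * nullMom v a * nullMom v b / norm3 v := by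
    intro a b
    have hpt : ∀ v : Fin 3 → ℝ,
        f v * nullMom v a * nullMom v b / norm3 v
          = Ξ⁻¹ * (ft (Ξ • v) * nullMom (Ξ • v) a * nullMom (Ξ • v) b / norm3 (Ξ • v)) := by
      intro v
      have hnorm : norm3 (Ξ • v) = Ξ * norm3 v := by
        simp only [norm3, Pi.smul_apply, smul_eq_mul, mul_pow]
        rw [← Finset.mul_sum, Real.sqrt_mul (by positivity), Real.sqrt_sq hΞ.le]
      have hmom : ∀ c : Fin 4, nullMom (Ξ • v) c = Ξ * nullMom v c := by
        intro c
        induction c using Fin.cases with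
        | zero => simp [nullMom, hnorm]
        | succ i => simp [nullMom, Matrix.cons_val_succ, Pi.smul_apply, smul_eq_mul]
      rw [hrel, hnorm, hmom, hmom]
      rcases eq_or_ne (norm3 v) 0 with h0 | h0
      · simp [h0]
      · field_simp
    calc (∫ v : Fin 3 → ℝ, f v * nullMom v a * nullMom v b / norm3 v)
        = ∫ v : Fin 3 → ℝ, Ξ⁻¹ * (ft (Ξ • v) * nullMom (Ξ • v) a * nullMom (Ξ • v) b / norm3 (Ξ • v)) := by
          exact integral_congr_ae (Filter.Eventually.of_forall hpt)
      _ = Ξ⁻¹ * ∫ v : Fin 3 → ℝ, ft (Ξ • v) * nullMom (Ξ • v) a * nullMom (Ξ • v) b / norm3 (Ξ • v) :=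
          integral_const_mul _ _
      _ = Ξ⁻¹ * (Ξ ^ 3)⁻¹ * ∫ v : Fin 3 → ℝ, ft v * nullMom v a * nullMom v b / norm3 v := by
          rw [Measure.integral_comp_smul volume (fun v : Fin 3 → ℝ => ft v * nullMom v a * nullMom v b / norm3 v) Ξ]
          simp only [Module.finrank_fintype_fun_eq_card, Fintype.card_fin, smul_eq_mul]
          rw [abs_of_pos (by positivity)]
          ring
  constructor
  · intro a b
    rw [hmain a b]
    field_simp
  · intro μ ν
    rw [Finset.mul_sum]
    refine Finset.sum_congr rfl fun a _ => ?_
    rw [Finset.mul_sum]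
    refine Finset.sum_congr rfl fun b _ => ?_
    rw [hmain a b]
    field_simp
end

section
/- With ê_a = e_a + v_c Γ_a{}^c{}_d ∂_{v_d} the horizontal lifts and L = η^{ab} v_a ê_b the Liouville vector field, the commutator [L, ê_g] equals η^{ab}(v_a Γ_{[b}{}^c{}_{g]} ê_c - v_c Γ_g{}^c{}_a ê_b) + η^{ab} v_a v_c R^c{}_{dbg} ∂_{v_d}, where R^c{}_{dab} are the frame components of the Riemann curvature tensor. -/
open scoped BigOperators

set_option maxHeartbeats 1000000 in
/-- The commutator `[L, ê_g]` of the Liouville vector field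
`L = η^{ab} v_a ê_b` with the horizontal lift `ê_g = e_g + v_c Γ_g{}^c{}_d ∂_{v_d}` equals
`η^{ab} (v_a Γ_{[b}{}^c{}_{g]} ê_c - v_c Γ_g{}^c{}_a ê_b) + η^{ab} v_a v_c R^c{}_{dbg} ∂_{v_d}`,
where `Γ_{[b}{}^c{}_{g]} = Γ_b{}^c{}_g - Γ_g{}^c{}_b` and `R^c{}_{dab}` are the frame
components of the Riemann tensor.  The bracket is computed componentwise in the
frame-induced chart `(x, v)`: `[X,Y]^i = X(Y^i) - Y(X^i)`, with the `x`-derivatives of `e`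
and `Γ` given by `De` and `DΓ` and the (polynomial) `v`-derivatives carried out explicitly.
Hypotheses: `{e_a}` is torsion-free (structure equation with the frame brackets) and `R` is
given by the frame curvature formula. -/
theorem liouville_horizontal_commutator
    (e α : (Fin 4 → ℝ) → Fin 4 → Fin 4 → ℝ)
    (De : (Fin 4 → ℝ) → Fin 4 → Fin 4 → Fin 4 → ℝ)
    (Γ : (Fin 4 → ℝ) → Fin 4 → Fin 4 → Fin 4 → ℝ)
    (DΓ : (Fin 4 → ℝ) → Fin 4 → Fin 4 → Fin 4 → Fin 4 → ℝ)
    (R : (Fin 4 → ℝ) → Fin 4 → Fin 4 → Fin 4 → Fin 4 → ℝ)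
    (hDe : ∀ x ν a μ, HasDerivAt (fun t => e (Function.update x ν t) a μ)
        (De x ν a μ) (x ν))
    (hDΓ : ∀ x ν b c d, HasDerivAt (fun t => Γ (Function.update x ν t) b c d)
        (DΓ x ν b c d) (x ν))
    (hdual : ∀ x a b, (∑ μ, α x a μ * e x b μ) = if a = b then (1 : ℝ) else 0)
    -- torsion-free structure equation: Γ_a{}^c{}_b - Γ_b{}^c{}_a = α^c([e_a, e_b])
    (htor : ∀ x a b c, Γ x a c b - Γ x b c a =
        ∑ μ, α x c μ * (∑ ν, (e x a ν * De x ν b μ - e x b ν * De x ν a μ)))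
    -- frame curvature formula:
    -- R^c_{dab} = e_{[a}(Γ_{b]}{}^c{}_d) + Γ_f{}^c{}_d Γ_{[b}{}^f{}_{a]}
    --             + Γ_b{}^f{}_d Γ_a{}^c{}_f - Γ_a{}^f{}_d Γ_b{}^c{}_f
    (hR : ∀ x c d a b, R x c d a b =
        (∑ ν, e x a ν * DΓ x ν b c d) - (∑ ν, e x b ν * DΓ x ν a c d)
          + (∑ f, Γ x f c d * (Γ x b f a - Γ x a f b))
          + (∑ f, Γ x b f d * Γ x a c f) - (∑ f, Γ x a f d * Γ x b c f)) :
    ∀ (x v : Fin 4 → ℝ) (g : Fin 4),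
      -- `∂_{x^μ}`-components of `[L, ê_g]`:
      (∀ μ : Fin 4,
        ((∑ a, ∑ b, eta a b * v a * (∑ ν, e x b ν * De x ν g μ))
          - ((∑ a, ∑ b, eta a b * v a * (∑ ν, e x g ν * De x ν b μ))
              + (∑ d, (∑ c, v c * Γ x g c d) * (∑ b, eta d b * e x b μ))))
        = (∑ a, ∑ b, eta a b * v a * (∑ c, (Γ x b c g - Γ x g c b) * e x c μ))
            - (∑ a, ∑ b, eta a b * (∑ c, v c * Γ x g c a) * e x b μ)) ∧
      -- `∂_{v_d}`-components of `[L, ê_g]`: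
      (∀ d : Fin 4,
        (((∑ a, ∑ b, eta a b * v a * (∑ ν, e x b ν * (∑ c, v c * DΓ x ν g c d)))
            + (∑ i, (∑ a, ∑ b, ∑ c, eta a b * v a * v c * Γ x b c i) * Γ x g i d))
          - ((∑ a, ∑ b, ∑ c, eta a b * v a * v c * (∑ ν, e x g ν * DΓ x ν b c d))
              + (∑ i, (∑ j, v j * Γ x g j i) *
                  ((∑ c, ∑ b, eta i b * v c * Γ x b c d)
                    + (∑ a, ∑ b, eta a b * v a * Γ x b i d)))))
        = (∑ a, ∑ b, eta a b * v a *
              (∑ c, (Γ x b c g - Γ x g c b) * (∑ j, v j * Γ x c j d)))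
            - (∑ a, ∑ b, eta a b * (∑ c, v c * Γ x g c a) * (∑ j, v j * Γ x b j d))
            + (∑ a, ∑ b, ∑ c, eta a b * v a * v c * R x c d b g)) := by

  intro x v g
  -- inverted duality: ∑ c, e x c μ * α x c ν = δ_{μν}
  have hdual' : ∀ μ ν : Fin 4, (∑ c, e x c μ * α x c ν) = if μ = ν then (1:ℝ) else 0 := by
    have hAB : (Matrix.of fun a μ => α x a μ) * (Matrix.of fun μ b => e x b μ) = 1 := by
      ext a b
      simpa [Matrix.mul_apply, Matrix.one_apply] using hdual x a b
    have hBA := mul_eq_one_comm.mp hAB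
    intro μ ν
    have := congrFun (congrFun hBA μ) ν
    simpa [Matrix.mul_apply, Matrix.one_apply, mul_comm] using this
  constructor
  · intro μ
    have key : ∀ b, (∑ c, (Γ x b c g - Γ x g c b) * e x c μ)
        = ∑ ν, (e x b ν * De x ν g μ - e x g ν * De x ν b μ) := by
      intro b
      calc (∑ c, (Γ x b c g - Γ x g c b) * e x c μ)
          = ∑ c, (∑ μ', α x c μ' * (∑ ν, (e x b ν * De x ν g μ' - e x g ν * De x ν b μ'))) * e x c μ := by
            refine Finset.sum_congr rfl fun c _ => ?_
            rw [htor x b g c]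
        _ = ∑ μ', (∑ c, e x c μ * α x c μ') * (∑ ν, (e x b ν * De x ν g μ' - e x g ν * De x ν b μ')) := by
            simp only [Finset.sum_mul]
            rw [Finset.sum_comm]
            exact Finset.sum_congr rfl fun μ' _ => Finset.sum_congr rfl fun c _ => by ring
        _ = ∑ μ', (if μ = μ' then (1:ℝ) else 0) * (∑ ν, (e x b ν * De x ν g μ' - e x g ν * De x ν b μ')) := by
            exact Finset.sum_congr rfl fun μ' _ => by rw [hdual' μ μ']
        _ = ∑ ν, (e x b ν * De x ν g μ - e x g ν * De x ν b μ) := by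
            simp
    simp only [key]
    simp only [Fin.sum_univ_four]
    simp only [eta, Fin.reduceEq, reduceIte, one_mul, neg_mul, neg_neg, mul_neg]
    ring
  · intro d
    simp only [hR]
    simp only [Fin.sum_univ_four]
    simp only [eta, Fin.reduceEq, reduceIte, one_mul, neg_mul, neg_neg, mul_neg]
    ring
end
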